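/- arXiv:1905.08558 — 5 statements merged into one kernel-verified Lean document; each statement's English description precedes it below -/
import Mathlib

section
/- Let (I_ℓ)_{ℓ≥1} be a sequence of complex numbers with (I_ℓ - I_{ℓ-1})/ℓ → 0 as ℓ → ∞. If the Cesàro means of (I_{2ℓ}) converge to A and the Cesàro means of (I_{2ℓ} - I_{2ℓ-1}) converge to B, then the Cesàro means of (I_ℓ) converge to A - B/2. -/
open Filter Finset

/-!
Write `M a k = k⁻¹ ∑_{ℓ=1}^k a ℓ`. Splitting `∑_{ℓ=1}^{2k} I ℓ` into even and odd terms gives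
`M I (2k) = (M (I ∘ 2·) k + M (I ∘ (2· - 1)) k) / 2`, and the two Cesàro means on the right tend to
`A` and `A - B`. Along odd indices, `M I (2k + 1)` differs from `M I (2k + 2)` by a factor tending
to `1` and the term `I (2k + 2) / (2k + 2)`; this term tends to `0` because any sequence with
convergent Cesàro means is `o(n)`.
-/

lemma Filter.Tendsto.of_comp_two_mul_of_comp_two_mul_add_one {α : Type*} {f : ℕ → α}
    {l : Filter α} (heven : Tendsto (fun k => f (2 * k)) atTop l)
    (hodd : Tendsto (fun k => f (2 * k + 1)) atTop l) : Tendsto f atTop l := by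
  intro s hs
  obtain ⟨N, hN⟩ := eventually_atTop.1 ((heven.eventually_mem hs).and (hodd.eventually_mem hs))
  refine eventually_atTop.2 ⟨2 * N, fun n hn => ?_⟩
  obtain ⟨k, rfl | rfl⟩ := Nat.even_or_odd' n
  · exact (hN k (by omega)).1
  · exact (hN k (by omega)).2

lemma Finset.sum_Icc_one_two_mul {M : Type*} [AddCommMonoid M] (a : ℕ → M) (k : ℕ) :
    ∑ ℓ ∈ Icc 1 (2 * k), a ℓ = ∑ ℓ ∈ Icc 1 k, (a (2 * ℓ) + a (2 * ℓ - 1)) := by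
  induction k with
  | zero => simp
  | succ k ih =>
    rw [show 2 * (k + 1) = 2 * k + 1 + 1 by ring, sum_Icc_succ_top (by omega),
      sum_Icc_succ_top (by omega), ih, sum_Icc_succ_top (by omega),
      show 2 * (k + 1) = 2 * k + 1 + 1 by ring, Nat.add_sub_cancel, add_assoc, add_comm (a _)]

variable {𝕜 : Type*} [RCLike 𝕜]

/-- Indexed from `1`: the mean of `a 1, …, a k`. -/
noncomputable def cesaroMean (a : ℕ → 𝕜) (k : ℕ) : 𝕜 := (k : 𝕜)⁻¹ * ∑ ℓ ∈ Icc 1 k, a ℓ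

lemma cesaroMean_succ (a : ℕ → 𝕜) (n : ℕ) :
    cesaroMean a (n + 1) = n / (n + 1) * cesaroMean a n + a (n + 1) / (n + 1) := by
  have hn : (n : 𝕜) + 1 ≠ 0 := by exact_mod_cast n.succ_ne_zero
  rcases eq_or_ne n 0 with rfl | hn0
  · simp [cesaroMean]
  · have hn' : (n : 𝕜) ≠ 0 := by exact_mod_cast hn0
    simp only [cesaroMean, sum_Icc_succ_top (Nat.le_add_left 1 n), Nat.cast_succ]
    field_simp

lemma cesaroMean_two_mul (a : ℕ → 𝕜) (k : ℕ) :
    cesaroMean a (2 * k) =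
      (cesaroMean (fun ℓ => a (2 * ℓ)) k + cesaroMean (fun ℓ => a (2 * ℓ - 1)) k) / 2 := by
  simp only [cesaroMean, sum_Icc_one_two_mul, sum_add_distrib, Nat.cast_mul, Nat.cast_ofNat,
    mul_inv]
  ring

lemma tendsto_div_natCast_of_tendsto_cesaroMean {a : ℕ → 𝕜} {L : 𝕜}
    (h : Tendsto (cesaroMean a) atTop (nhds L)) :
    Tendsto (fun n : ℕ => a n / n) atTop (nhds 0) := by
  rw [← tendsto_add_atTop_iff_nat 1]
  have hratio := tendsto_natCast_div_add_atTop (1 : 𝕜)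
  have hlim := ((tendsto_add_atTop_iff_nat 1).2 h).sub (hratio.mul h)
  rw [one_mul, sub_self] at hlim
  refine hlim.congr fun n => ?_
  rw [cesaroMean_succ, Nat.cast_succ]
  ring

lemma tendsto_cesaroMean_of_tendsto_two_mul {a : ℕ → 𝕜} {L A : 𝕜}
    (hmean : Tendsto (fun k => cesaroMean a (2 * k)) atTop (nhds L))
    (heven : Tendsto (cesaroMean fun ℓ => a (2 * ℓ)) atTop (nhds A)) :
    Tendsto (cesaroMean a) atTop (nhds L) := by
  refine hmean.of_comp_two_mul_of_comp_two_mul_add_one ?_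
  have hnext : Tendsto (fun k => cesaroMean a (2 * k + 1 + 1)) atTop (nhds L) :=
    ((tendsto_add_atTop_iff_nat 1).2 hmean).congr fun k => by rw [mul_add_one]
  have hterm : Tendsto (fun k : ℕ => a (2 * k + 1 + 1) / ((2 * k + 1 : ℕ) + 1)) atTop
      (nhds 0) := by
    have h := ((tendsto_add_atTop_iff_nat 1).2
      (tendsto_div_natCast_of_tendsto_cesaroMean heven)).div_const 2
    rw [zero_div] at h
    refine h.congr fun k => ?_
    rw [div_div, show 2 * (k + 1) = 2 * k + 1 + 1 by ring]
    congr 1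
    push_cast
    ring
  have hratio : Tendsto (fun k : ℕ => ((2 * k + 1 : ℕ) : 𝕜) / ((2 * k + 1 : ℕ) + 1)) atTop
      (nhds 1) :=
    (tendsto_natCast_div_add_atTop 1).comp <|
      (tendsto_add_atTop_nat 1).comp (tendsto_id.const_mul_atTop' two_pos)
  have h := (hnext.sub hterm).div hratio one_ne_zero
  rw [sub_zero, div_one] at h
  refine h.congr fun k => ?_
  have hratio_ne : ((2 * k + 1 : ℕ) : 𝕜) / ((2 * k + 1 : ℕ) + 1) ≠ 0 :=
    div_ne_zero (Nat.cast_ne_zero.2 (by omega)) (by exact_mod_cast (2 * k + 1).succ_ne_zero)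
  rw [Pi.div_apply, cesaroMean_succ a (2 * k + 1), add_sub_cancel_right,
    mul_div_cancel_left₀ _ hratio_ne]

theorem cesaro_of_even_and_differences_general (I : ℕ → ℂ) (A B : ℂ)
    (hA : Tendsto (fun k : ℕ => (k : ℂ)⁻¹ * ∑ ℓ ∈ Finset.Icc 1 k, I (2 * ℓ))
      atTop (nhds A))
    (hB : Tendsto (fun k : ℕ => (k : ℂ)⁻¹ * ∑ ℓ ∈ Finset.Icc 1 k,
        (I (2 * ℓ) - I (2 * ℓ - 1))) atTop (nhds B)) :
    Tendsto (fun k : ℕ => (k : ℂ)⁻¹ * ∑ ℓ ∈ Finset.Icc 1 k, I ℓ)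
      atTop (nhds (A - B / 2)) := by
  have heven : Tendsto (cesaroMean fun ℓ => I (2 * ℓ)) atTop (nhds A) := hA
  have hodd : Tendsto (cesaroMean fun ℓ => I (2 * ℓ - 1)) atTop (nhds (A - B)) :=
    (hA.sub hB).congr fun k => by
      simp only [cesaroMean, ← mul_sub, ← sum_sub_distrib, sub_sub_cancel]
  have hmean : Tendsto (fun k => cesaroMean I (2 * k)) atTop (nhds (A - B / 2)) := by
    have h := (heven.add hodd).div_const 2
    rw [show (A + (A - B)) / 2 = A - B / 2 by ring] at h
    exact h.congr fun k => (cesaroMean_two_mul I k).symm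
  exact tendsto_cesaroMean_of_tendsto_two_mul hmean heven

/-- If `(I ℓ - I (ℓ-1))/ℓ → 0`, the Cesàro means of `(I (2ℓ))` converge to `A`, and the
Cesàro means of `(I (2ℓ) - I (2ℓ-1))` converge to `B`, then the Cesàro means of `(I ℓ)`
converge to `A - B/2`. -/
theorem cesaro_of_even_and_differences (I : ℕ → ℂ) (A B : ℂ)
    (hdiff : Tendsto (fun ℓ : ℕ => (I ℓ - I (ℓ - 1)) / (ℓ : ℂ)) atTop (nhds 0))
    (hA : Tendsto (fun k : ℕ => (k : ℂ)⁻¹ * ∑ ℓ ∈ Finset.Icc 1 k, I (2 * ℓ))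
      atTop (nhds A))
    (hB : Tendsto (fun k : ℕ => (k : ℂ)⁻¹ * ∑ ℓ ∈ Finset.Icc 1 k,
        (I (2 * ℓ) - I (2 * ℓ - 1))) atTop (nhds B)) :
    Tendsto (fun k : ℕ => (k : ℂ)⁻¹ * ∑ ℓ ∈ Finset.Icc 1 k, I ℓ)
      atTop (nhds (A - B / 2)) :=
  cesaro_of_even_and_differences_general I A B hA hB
end

section
/- Let n ≥ 4 be even with k = n/2. Then there exists a constant c₀ > 0 such that for all φ ∈ [0, 2π/n] and all α, β ∈ {1, …, n} with α ≠ β and (α, β) ∉ {(1, k+1), (k+1, 1), (k, n), (n, k)}, one has |sin(φ + 2π(α-1)/n)| + |sin(φ + 2π(β-1)/n)| ≥ c₀. -/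
open Real

private lemma sin_ge_aux (c x : ℝ) (hc0 : 0 ≤ c) (hc : c ≤ π / 2) (h1 : c ≤ x)
    (h2 : x ≤ π - c) : Real.sin c ≤ Real.sin x := by
  have hπ := Real.pi_pos
  rcases le_or_gt x (π / 2) with h | h
  · exact Real.strictMonoOn_sin.monotoneOn ⟨by linarith, hc⟩ ⟨by linarith, h⟩ h1
  · rw [← Real.sin_pi_sub x]
    exact Real.strictMonoOn_sin.monotoneOn ⟨by linarith, hc⟩ ⟨by linarith, by linarith⟩
      (by linarith)

private lemma sin_superadd (a b : ℝ) (ha : 0 ≤ a) (hb : 0 ≤ b) (hab : a + b ≤ π) :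
    Real.sin (a + b) ≤ Real.sin a + Real.sin b := by
  have hsa := Real.sin_nonneg_of_nonneg_of_le_pi ha (by linarith)
  have hsb := Real.sin_nonneg_of_nonneg_of_le_pi hb (by linarith)
  rw [Real.sin_add]
  nlinarith [Real.cos_le_one a, Real.cos_le_one b, Real.neg_one_le_cos a,
    Real.neg_one_le_cos b]

/-- For even `n ≥ 4` with `k = n/2`, the quantity
`|sin(φ + 2π(α-1)/n)| + |sin(φ + 2π(β-1)/n)|` is uniformly bounded away from zero
over `φ ∈ [0, 2π/n]` and distinct `α, β ∈ {1,…,n}` such that `(α,β)` is none of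
`(1,k+1), (k+1,1), (k,n), (n,k)`. -/
theorem sin_sum_bounded_below_even (n k : ℕ) (hn4 : 4 ≤ n) (hk : n = 2 * k) :
    ∃ c₀ > 0, ∀ φ ∈ Set.Icc (0 : ℝ) (2 * π / n),
      ∀ α ∈ Finset.Icc 1 n, ∀ β ∈ Finset.Icc 1 n, α ≠ β →
        (α, β) ≠ (1, k + 1) → (α, β) ≠ (k + 1, 1) →
        (α, β) ≠ (k, n) → (α, β) ≠ (n, k) →
        c₀ ≤ |Real.sin (φ + 2 * π * ((α : ℝ) - 1) / n)| +
              |Real.sin (φ + 2 * π * ((β : ℝ) - 1) / n)| := by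
  have hπ := Real.pi_pos
  have hk2 : 2 ≤ k := by omega
  have hn0 : (0:ℝ) < n := by positivity
  have hn4' : (4:ℝ) ≤ n := by exact_mod_cast hn4
  set T : ℝ := 2 * π / n with hTdef
  have hTpos : 0 < T := by positivity
  have hT2 : T ≤ π / 2 := by
    rw [hTdef, div_le_div_iff₀ hn0 (by norm_num)]
    nlinarith
  have hkR : (n:ℝ) = 2 * k := by exact_mod_cast hk
  have hTk : T * k = π := by
    rw [hTdef]
    field_simp
    nlinarith [hkR]
  refine ⟨Real.sin T, Real.sin_pos_of_pos_of_lt_pi hTpos (by linarith), ?_⟩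
  intro φ hφ α hα β hβ hne e1 e2 e3 e4
  obtain ⟨hφ0, hφT⟩ := hφ
  simp only [Finset.mem_Icc] at hα hβ
  have key : ∀ γ : ℕ, 1 ≤ γ → γ ≤ n →
      Real.sin T ≤ |Real.sin (φ + 2 * π * ((γ:ℝ) - 1) / n)| ∨
      ((γ = 1 ∨ γ = k + 1) ∧
        |Real.sin (φ + 2 * π * ((γ:ℝ) - 1) / n)| = Real.sin φ) ∨
      ((γ = k ∨ γ = n) ∧
        |Real.sin (φ + 2 * π * ((γ:ℝ) - 1) / n)| = Real.sin (T - φ)) := by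
    intro γ hγ1 hγn
    have harg : φ + 2 * π * ((γ:ℝ) - 1) / n = φ + T * ((γ:ℝ) - 1) := by
      rw [hTdef]; ring
    rw [harg]
    by_cases h1 : γ = 1
    · right; left
      refine ⟨Or.inl h1, ?_⟩
      have hcast : φ + T * ((γ:ℝ) - 1) = φ := by rw [h1]; push_cast; ring
      rw [hcast]
      exact abs_of_nonneg (Real.sin_nonneg_of_nonneg_of_le_pi hφ0 (by linarith))
    by_cases h2 : γ = k + 1
    · right; left
      refine ⟨Or.inr h2, ?_⟩
      have hcast : φ + T * ((γ:ℝ) - 1) = φ + π := by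
        rw [h2]; push_cast; rw [← hTk]; ring
      rw [hcast, Real.sin_add_pi, abs_neg]
      exact abs_of_nonneg (Real.sin_nonneg_of_nonneg_of_le_pi hφ0 (by linarith))
    by_cases h3 : γ = k
    · right; right
      refine ⟨Or.inl h3, ?_⟩
      have hcast : φ + T * ((γ:ℝ) - 1) = π - (T - φ) := by
        rw [h3, ← hTk]; ring
      rw [hcast, Real.sin_pi_sub]
      exact abs_of_nonneg (Real.sin_nonneg_of_nonneg_of_le_pi (by linarith) (by linarith))
    by_cases h4 : γ = n
    · right; right
      refine ⟨Or.inr h4, ?_⟩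
      have hcast : φ + T * ((γ:ℝ) - 1) = (φ - T) + 2 * π := by
        rw [h4, hkR, ← hTk]; ring
      rw [hcast, Real.sin_add_two_pi,
        show Real.sin (φ - T) = -Real.sin (T - φ) from by rw [← Real.sin_neg, neg_sub],
        abs_neg]
      exact abs_of_nonneg (Real.sin_nonneg_of_nonneg_of_le_pi (by linarith) (by linarith))
    · left
      rcases le_or_gt γ k with hle | hlt
      · -- 2 ≤ γ ≤ k - 1
        have hγ2 : 2 ≤ γ := by omega
        have hγk : γ ≤ k - 1 := by omega
        have hc1 : (2:ℝ) ≤ (γ:ℝ) := by exact_mod_cast hγ2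
        have hc2 : (γ:ℝ) ≤ (k:ℝ) - 1 := by
          have : (γ:ℝ) ≤ ((k - 1 : ℕ):ℝ) := by exact_mod_cast hγk
          have hkc : ((k - 1 : ℕ):ℝ) = (k:ℝ) - 1 := by
            push_cast [Nat.cast_sub (by omega : 1 ≤ k)]; ring
          linarith [hkc ▸ this]
        set x := φ + T * ((γ:ℝ) - 1) with hx
        have hxl : T ≤ x := by
          have : T * 1 ≤ T * ((γ:ℝ) - 1) := by
            apply mul_le_mul_of_nonneg_left (by linarith) (le_of_lt hTpos)
          simp at this; nlinarith
        have hxr : x ≤ π - T := by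
          have : T * ((γ:ℝ) - 1) ≤ T * ((k:ℝ) - 2) := by
            apply mul_le_mul_of_nonneg_left (by linarith) (le_of_lt hTpos)
          have hπT : T * ((k:ℝ) - 2) = π - 2 * T := by rw [← hTk]; ring
          rw [hπT] at this
          simp only [hx]; linarith
        have := sin_ge_aux T x (le_of_lt hTpos) hT2 hxl hxr
        calc Real.sin T ≤ Real.sin x := this
          _ ≤ |Real.sin x| := le_abs_self _
      · -- k + 2 ≤ γ ≤ n - 1
        have hγ2 : k + 2 ≤ γ := by omega
        have hγk : γ ≤ n - 1 := by omega
        have hc1 : (k:ℝ) + 2 ≤ (γ:ℝ) := by exact_mod_cast hγ2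
        have hc2 : (γ:ℝ) ≤ (n:ℝ) - 1 := by
          have : (γ:ℝ) ≤ ((n - 1 : ℕ):ℝ) := by exact_mod_cast hγk
          have hkc : ((n - 1 : ℕ):ℝ) = (n:ℝ) - 1 := by
            push_cast [Nat.cast_sub (by omega : 1 ≤ n)]; ring
          linarith [hkc ▸ this]
        set x := φ + T * ((γ:ℝ) - 1) with hx
        have hxl : T ≤ x - π := by
          have : T * ((k:ℝ) + 1) ≤ T * ((γ:ℝ) - 1) := by
            apply mul_le_mul_of_nonneg_left (by linarith) (le_of_lt hTpos)
          have hπT : T * ((k:ℝ) + 1) = π + T := by rw [← hTk]; ring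
          rw [hπT] at this
          simp only [hx]; linarith
        have hxr : x - π ≤ π - T := by
          have : T * ((γ:ℝ) - 1) ≤ T * ((n:ℝ) - 2) := by
            apply mul_le_mul_of_nonneg_left (by linarith) (le_of_lt hTpos)
          have hπT : T * ((n:ℝ) - 2) = 2 * π - 2 * T := by
            rw [hkR, ← hTk]; ring
          rw [hπT] at this
          simp only [hx]; linarith
        have hge := sin_ge_aux T (x - π) (le_of_lt hTpos) hT2 hxl hxr
        have hsx : Real.sin (x - π) = -Real.sin x := Real.sin_sub_pi x
        have : Real.sin (x - π) ≤ |Real.sin x| := by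
          rw [hsx]; exact neg_le_abs _
        linarith
  have hnA := abs_nonneg (Real.sin (φ + 2 * π * ((α:ℝ) - 1) / n))
  have hnB := abs_nonneg (Real.sin (φ + 2 * π * ((β:ℝ) - 1) / n))
  rcases key α hα.1 hα.2 with hA | ⟨hαc, hαe⟩ | ⟨hαc, hαe⟩ <;>
    rcases key β hβ.1 hβ.2 with hB | ⟨hβc, hβe⟩ | ⟨hβc, hβe⟩
  · linarith
  · linarith
  · linarith
  · linarith
  · -- both type A: contradiction
    exfalso
    rcases hαc with rfl | rfl <;> rcases hβc with h | h
    · exact hne (h ▸ rfl)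
    · exact e1 (by rw [h])
    · exact e2 (by rw [h])
    · exact hne (by omega)
  · -- α type A, β type B
    rw [hαe, hβe]
    have := sin_superadd φ (T - φ) hφ0 (by linarith) (by linarith)
    have heq : φ + (T - φ) = T := by ring
    rw [heq] at this
    linarith
  · linarith
  · -- α type B, β type A
    rw [hαe, hβe]
    have := sin_superadd φ (T - φ) hφ0 (by linarith) (by linarith)
    have heq : φ + (T - φ) = T := by ring
    rw [heq] at this
    linarith
  · -- both type B: contradiction
    exfalso
    rcases hαc with rfl | rfl <;> rcases hβc with h | h
    · exact hne (h ▸ rfl)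
    · exact e3 (by rw [h])
    · exact e4 (by rw [h])
    · exact hne (by omega)
end

section
/- Let ξ₁, ξ₂ be distinct complex numbers, neither of which lies in the nonnegative real axis [0, ∞). Then ∫₀^∞ dt / ((t - ξ₁)(t - ξ₂)) = (Log(-ξ₂) - Log(-ξ₁)) / (ξ₁ - ξ₂), where Log denotes the principal branch of the complex logarithm with imaginary part in (-π, π]. -/
open MeasureTheory Set Filter Complex Topology

private lemma aux_slit {ξ : ℂ} (h : ¬(ξ.im = 0 ∧ 0 ≤ ξ.re)) {x : ℝ} (hx : 0 ≤ x) :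
    (x : ℂ) - ξ ∈ Complex.slitPlane := by
  rw [Complex.mem_slitPlane_iff]
  simp only [Complex.sub_re, Complex.sub_im, Complex.ofReal_re, Complex.ofReal_im, zero_sub,
    neg_ne_zero]
  by_cases him : ξ.im = 0
  · left
    have : ¬ 0 ≤ ξ.re := fun hre => h ⟨him, hre⟩
    linarith [not_le.mp this]
  · right; exact him

private lemma aux_ne {ξ : ℂ} (h : ¬(ξ.im = 0 ∧ 0 ≤ ξ.re)) {x : ℝ} (hx : 0 ≤ x) :
    (x : ℂ) - ξ ≠ 0 :=
  Complex.slitPlane_ne_zero (aux_slit h hx)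

/-- For distinct `ξ₁, ξ₂ ∈ ℂ` off the nonnegative real axis,
`∫₀^∞ dt/((t-ξ₁)(t-ξ₂)) = (Log(-ξ₂) - Log(-ξ₁))/(ξ₁ - ξ₂)`, where `Log` is the
principal complex logarithm. -/
theorem integral_inv_mul_sub_sub (ξ₁ ξ₂ : ℂ) (hne : ξ₁ ≠ ξ₂)
    (h₁ : ¬(ξ₁.im = 0 ∧ 0 ≤ ξ₁.re)) (h₂ : ¬(ξ₂.im = 0 ∧ 0 ≤ ξ₂.re)) :
    ∫ t in Set.Ioi (0 : ℝ), 1 / (((t : ℂ) - ξ₁) * ((t : ℂ) - ξ₂)) =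
      (Complex.log (-ξ₂) - Complex.log (-ξ₁)) / (ξ₁ - ξ₂) := by
  have hd : ξ₁ - ξ₂ ≠ 0 := sub_ne_zero.mpr hne
  set F : ℝ → ℂ := fun t =>
    (Complex.log ((t : ℂ) - ξ₁) - Complex.log ((t : ℂ) - ξ₂)) / (ξ₁ - ξ₂) with hF
  set f : ℝ → ℂ := fun t => 1 / (((t : ℂ) - ξ₁) * ((t : ℂ) - ξ₂)) with hf
  -- derivative
  have hderiv : ∀ x ∈ Ici (0 : ℝ), HasDerivAt F (f x) x := by
    intro x hx
    have hx0 : (0:ℝ) ≤ x := hx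
    have n1 := aux_ne h₁ hx0
    have n2 := aux_ne h₂ hx0
    have d1 : HasDerivAt (fun z : ℂ => Complex.log (z - ξ₁)) (((x : ℂ) - ξ₁)⁻¹) x := by
      simpa [Function.comp_def] using (Complex.hasDerivAt_log (aux_slit h₁ hx0)).comp (x : ℂ)
        ((hasDerivAt_id (x : ℂ)).sub_const ξ₁)
    have d2 : HasDerivAt (fun z : ℂ => Complex.log (z - ξ₂)) (((x : ℂ) - ξ₂)⁻¹) x := by
      simpa [Function.comp_def] using (Complex.hasDerivAt_log (aux_slit h₂ hx0)).comp (x : ℂ)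
        ((hasDerivAt_id (x : ℂ)).sub_const ξ₂)
    have := ((d1.sub d2).comp_ofReal).div_const (ξ₁ - ξ₂)
    convert this using 1
    case e'_4 => rfl
    case e'_8 => rfl
    rw [hf, inv_sub_inv n1 n2, show ((x:ℂ) - ξ₂) - ((x:ℂ) - ξ₁) = ξ₁ - ξ₂ by ring]
    rw [div_div, mul_comm (((x:ℂ) - ξ₁) * ((x:ℂ) - ξ₂)) (ξ₁ - ξ₂), ← div_div, div_self hd]
  -- integrability
  have hint : IntegrableOn f (Ioi (0:ℝ)) := by
    have hcont : ContinuousOn f (Ici (0:ℝ)) := by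
      apply ContinuousOn.div continuousOn_const
      · exact ((Complex.continuous_ofReal.continuousOn.sub continuousOn_const).mul
          (Complex.continuous_ofReal.continuousOn.sub continuousOn_const))
      · intro x hx
        exact mul_ne_zero (aux_ne h₁ hx) (aux_ne h₂ hx)
    have hloc : LocallyIntegrableOn f (Ici (0:ℝ)) :=
      hcont.locallyIntegrableOn measurableSet_Ici
    have hbig : f =O[atTop] fun t : ℝ => t ^ (-2 : ℝ) := by
      rw [Asymptotics.isBigO_iff]
      refine ⟨4, ?_⟩
      filter_upwards [Filter.eventually_ge_atTop (max 1 (2 * max ‖ξ₁‖ ‖ξ₂‖))] with t ht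
      have ht1 : (1:ℝ) ≤ t := le_trans (le_max_left _ _) ht
      have ht0 : (0:ℝ) < t := lt_of_lt_of_le one_pos ht1
      have hb1 : ‖ξ₁‖ ≤ t / 2 := by
        have := le_trans (le_max_right _ _) ht
        have := le_max_left ‖ξ₁‖ ‖ξ₂‖; linarith
      have hb2 : ‖ξ₂‖ ≤ t / 2 := by
        have := le_trans (le_max_right _ _) ht
        have := le_max_right ‖ξ₁‖ ‖ξ₂‖; linarith
      have l1 : t / 2 ≤ ‖(t : ℂ) - ξ₁‖ := by
        have := norm_sub_norm_le (t : ℂ) ξ₁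
        rw [Complex.norm_real, Real.norm_of_nonneg ht0.le] at this
        linarith
      have l2 : t / 2 ≤ ‖(t : ℂ) - ξ₂‖ := by
        have := norm_sub_norm_le (t : ℂ) ξ₂
        rw [Complex.norm_real, Real.norm_of_nonneg ht0.le] at this
        linarith
      have ht2 : (0:ℝ) < t / 2 := by linarith
      have hle : t / 2 * (t / 2) ≤ ‖(t:ℂ) - ξ₁‖ * ‖(t:ℂ) - ξ₂‖ :=
        mul_le_mul l1 l2 ht2.le (norm_nonneg _)
      rw [hf]
      have e1 : ‖(1:ℂ) / (((t:ℂ)-ξ₁)*((t:ℂ)-ξ₂))‖ = (‖(t:ℂ)-ξ₁‖*‖(t:ℂ)-ξ₂‖)⁻¹ := by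
        rw [norm_div, norm_one, norm_mul, one_div]
      have e2 : ‖t ^ (-2:ℝ)‖ = (t^2)⁻¹ := by
        rw [Real.norm_of_nonneg (Real.rpow_nonneg ht0.le _), Real.rpow_neg ht0.le, Real.rpow_two]
      have htne : t ≠ 0 := ht0.ne'
      have e3 : 4 * (t^2)⁻¹ = (t/2*(t/2))⁻¹ := by field_simp; ring
      rw [e1, e2, e3]
      exact inv_anti₀ (by positivity) hle
    have hgi : IntegrableAtFilter (fun t : ℝ => t ^ (-2:ℝ)) atTop :=
      ⟨Ioi 1, Ioi_mem_atTop 1, integrableOn_Ioi_rpow_of_lt (by norm_num) one_pos⟩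
    exact (hloc.integrableOn_of_isBigO_atTop hbig hgi).mono Ioi_subset_Ici_self le_rfl
  -- limit at infinity
  have hlim : Tendsto F atTop (𝓝 0) := by
    have key : ∀ ξ : ℂ, ¬(ξ.im = 0 ∧ 0 ≤ ξ.re) →
        Tendsto (fun t : ℝ => Complex.log (1 - ξ / t)) atTop (𝓝 0) := by
      intro ξ hξ
      have h1 : Tendsto (fun t : ℝ => 1 - ξ / (t : ℂ)) atTop (𝓝 1) := by
        have : Tendsto (fun t : ℝ => ξ / (t : ℂ)) atTop (𝓝 0) := by
          have : Tendsto (fun t : ℝ => ‖ξ / (t : ℂ)‖) atTop (𝓝 0) := by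
            simp only [norm_div, Complex.norm_real, Real.norm_eq_abs]
            exact Tendsto.div_atTop tendsto_const_nhds
              (tendsto_abs_atTop_atTop)
          exact tendsto_zero_iff_norm_tendsto_zero.mpr this
        simpa using tendsto_const_nhds.sub this
      have := (_root_.continuousAt_clog (by simp [Complex.mem_slitPlane_iff])).tendsto.comp h1
      simpa [Function.comp_def] using this
    have hcong : ∀ᶠ t : ℝ in atTop,
        Complex.log ((t:ℂ) - ξ₁) - Complex.log ((t:ℂ) - ξ₂) =
          Complex.log (1 - ξ₁ / t) - Complex.log (1 - ξ₂ / t) := by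
      filter_upwards [Filter.eventually_gt_atTop (0:ℝ)] with t ht
      have hsplit : ∀ ξ : ℂ, ¬(ξ.im = 0 ∧ 0 ≤ ξ.re) →
          Complex.log ((t:ℂ) - ξ) = Real.log t + Complex.log (1 - ξ / t) := by
        intro ξ hξ
        have hz : (1 : ℂ) - ξ / t ≠ 0 := by
          intro h0
          have : (t:ℂ) - ξ = 0 := by
            have ht' : (t:ℂ) ≠ 0 := Complex.ofReal_ne_zero.mpr ht.ne'
            field_simp at h0
            rw [mul_zero] at h0
            exact h0
          exact aux_ne hξ ht.le this
        have : (t:ℂ) - ξ = (t:ℝ) * (1 - ξ / t) := by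
          have ht' : (t:ℂ) ≠ 0 := Complex.ofReal_ne_zero.mpr ht.ne'
          field_simp
        rw [this, Complex.log_ofReal_mul ht hz]
      rw [hsplit ξ₁ h₁, hsplit ξ₂ h₂]; ring
    have : Tendsto (fun t : ℝ => Complex.log ((t:ℂ) - ξ₁) - Complex.log ((t:ℂ) - ξ₂))
        atTop (𝓝 0) := by
      rw [Filter.tendsto_congr' hcong]
      simpa using (key ξ₁ h₁).sub (key ξ₂ h₂)
    simpa [hF] using this.div_const (ξ₁ - ξ₂)
  have := integral_Ioi_of_hasDerivAt_of_tendsto' hderiv hint hlim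
  rw [hf] at this
  rw [this]
  simp only [hF, Complex.ofReal_zero, zero_sub]
  rw [← neg_div, neg_sub]
end

section
/- Let Q : [0, 1] → ℂ be a bounded measurable function with Q(x)/x → 0 as x → 0⁺, and let c > 0. Then R² ∫₀^1 Q(x) e^{-cRx} dx → 0 as R → ∞. -/
open Filter MeasureTheory

/-- If `Q : [0,1] → ℂ` is bounded measurable with `Q(x)/x → 0` as `x → 0⁺` and `c > 0`,
then `R² ∫₀¹ Q(x) e^{-cRx} dx → 0` as `R → ∞`. -/
theorem laplace_decay_of_deriv_zero (Q : ℝ → ℂ) (hmeas : Measurable Q)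
    (hbdd : ∃ M : ℝ, ∀ x ∈ Set.Icc (0 : ℝ) 1, ‖Q x‖ ≤ M)
    (hQ : Tendsto (fun x : ℝ => Q x / (x : ℂ)) (nhdsWithin 0 (Set.Ioi 0)) (nhds 0))
    (c : ℝ) (hc : 0 < c) :
    Tendsto (fun R : ℝ =>
        (R : ℂ) ^ 2 * ∫ x in (0 : ℝ)..1, Q x * Complex.exp (-(c * R * x)))
      atTop (nhds 0) := by
  obtain ⟨M₀, hM₀⟩ := hbdd
  set M : ℝ := max M₀ 0 with hMdef
  have hM : ∀ x ∈ Set.Icc (0:ℝ) 1, ‖Q x‖ ≤ M := fun x hx =>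
    (hM₀ x hx).trans (le_max_left _ _)
  have hMnn : 0 ≤ M := le_max_right _ _
  rw [NormedAddCommGroup.tendsto_nhds_zero]
  intro ε hε
  set ε' : ℝ := ε * c ^ 2 / 4 with hε'def
  have hε' : 0 < ε' := by positivity
  -- get δ from hQ
  rw [Metric.tendsto_nhdsWithin_nhds] at hQ
  obtain ⟨δ₀, hδ₀, hδQ⟩ := hQ ε' hε'
  set δ : ℝ := min (δ₀ / 2) 1 with hδdef
  have hδpos : 0 < δ := lt_min (by linarith) one_pos
  have hδ1 : δ ≤ 1 := min_le_right _ _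
  have hQsmall : ∀ x ∈ Set.Ioc (0:ℝ) δ, ‖Q x‖ ≤ ε' * x := by
    intro x hx
    have hx0 : 0 < x := hx.1
    have hxδ : dist x 0 < δ₀ := by
      rw [Real.dist_eq, sub_zero, abs_of_pos hx0]
      exact lt_of_le_of_lt hx.2 (lt_of_le_of_lt (min_le_left _ _) (by linarith))
    have hlt := hδQ hx0 hxδ
    rw [dist_zero_right] at hlt
    have hx0' : (x : ℂ) ≠ 0 := by exact_mod_cast hx0.ne'
    calc ‖Q x‖ = ‖Q x / (x:ℂ)‖ * ‖(x:ℂ)‖ := by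
          rw [← norm_mul, div_mul_cancel₀ _ hx0']
      _ ≤ ε' * x := by
          have : ‖(x:ℂ)‖ = x := by
            rw [Complex.norm_real, Real.norm_eq_abs, abs_of_pos hx0]
          rw [this]
          exact mul_le_mul_of_nonneg_right hlt.le hx0.le
  -- tail term tends to zero
  have htail0 : Tendsto (fun R : ℝ => M * (R ^ 2 * Real.exp (-(c * δ) * R)))
      atTop (nhds 0) := by
    have h2 := tendsto_rpow_mul_exp_neg_mul_atTop_nhds_zero 2 (c * δ) (by positivity)
    have h2' : Tendsto (fun R : ℝ => R ^ 2 * Real.exp (-(c * δ) * R)) atTop (nhds 0) := by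
      refine h2.congr fun R => ?_
      rw [show ((2:ℝ)) = ((2:ℕ) : ℝ) by norm_num, Real.rpow_natCast]
    simpa using h2'.const_mul M
  have hev : ∀ᶠ R in atTop, M * (R ^ 2 * Real.exp (-(c * δ) * R)) < ε / 2 :=
    htail0.eventually_lt_const (by linarith)
  filter_upwards [hev, eventually_ge_atTop (1:ℝ)] with R hRtail hR1
  have hR0 : 0 < R := lt_of_lt_of_le one_pos hR1
  have hcR : 0 < c * R := by positivity
  set g : ℝ → ℂ := fun x => Q x * Complex.exp (-(↑c * ↑R * ↑x)) with hgdef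
  have hnorm : ∀ x : ℝ, ‖g x‖ = ‖Q x‖ * Real.exp (-(c * R * x)) := by
    intro x
    rw [hgdef]
    simp only [norm_mul]
    congr 1
    rw [show -((c:ℂ) * R * x) = ((-(c * R * x) : ℝ) : ℂ) by push_cast; ring,
      ← Complex.ofReal_exp, Complex.norm_real, Real.norm_eq_abs,
      abs_of_pos (Real.exp_pos _)]
  -- integrability on [0,1]
  have hgmeas : Measurable g := by
    apply hmeas.mul
    exact Complex.measurable_exp.comp (by fun_prop)
  have hint01 : IntervalIntegrable g volume 0 1 := by
    rw [intervalIntegrable_iff, Set.uIoc_of_le zero_le_one]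
    apply Measure.integrableOn_of_bounded (M := M)
    · exact (measure_mono Set.Ioc_subset_Icc_self).trans_lt measure_Icc_lt_top |>.ne
    · exact hgmeas.aestronglyMeasurable
    · refine (ae_restrict_iff' measurableSet_Ioc).2 (ae_of_all _ fun x hx => ?_)
      rw [hnorm x]
      have h1 : ‖Q x‖ ≤ M := hM x ⟨hx.1.le, hx.2⟩
      have h2 : Real.exp (-(c * R * x)) ≤ 1 := by
        rw [Real.exp_le_one_iff]
        have hx0 : 0 < x := hx.1
        have : 0 ≤ c * R * x := by positivity
        linarith
      calc ‖Q x‖ * Real.exp (-(c * R * x)) ≤ M * 1 :=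
            mul_le_mul h1 h2 (Real.exp_pos _).le hMnn
        _ = M := mul_one M
  have hintδ : IntervalIntegrable g volume 0 δ :=
    hint01.mono_set (Set.uIcc_subset_uIcc_iff_le.2 (by
      simp [Set.uIcc_of_le hδpos.le, Set.uIcc_of_le (zero_le_one' ℝ), hδpos.le, hδ1]))
  have hintδ1 : IntervalIntegrable g volume δ 1 :=
    hint01.mono_set (Set.uIcc_subset_uIcc_iff_le.2 (by
      simp [Set.uIcc_of_le hδ1, Set.uIcc_of_le (zero_le_one' ℝ), hδpos.le, hδ1]))
  -- integral of x * exp(-(c R x)) over Ioi 0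
  have hIoi : IntegrableOn (fun x : ℝ => x * Real.exp (-(c * R * x))) (Set.Ioi 0) := by
    have h := integrableOn_rpow_mul_exp_neg_mul_rpow (s := 1) (p := 1) (b := c * R)
      (by norm_num) one_pos hcR
    apply h.congr_fun ?_ measurableSet_Ioi
    intro x _
    simp only [Real.rpow_one]
    ring_nf
  have hval : ∫ x in Set.Ioi (0:ℝ), x * Real.exp (-(c * R * x)) = (1 / (c * R)) ^ 2 := by
    have h := Real.integral_rpow_mul_exp_neg_mul_Ioi (show (0:ℝ) < 2 by norm_num) hcR
    rw [Real.Gamma_two, mul_one] at h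
    simp only [show (2:ℝ) - 1 = 1 by norm_num, Real.rpow_one] at h
    rw [show ((2:ℝ)) = ((2:ℕ) : ℝ) by norm_num, Real.rpow_natCast] at h
    rw [← h]
  -- first piece
  have h1 : ‖∫ x in (0:ℝ)..δ, g x‖ ≤ ε' * (1 / (c * R)) ^ 2 := by
    rw [intervalIntegral.integral_of_le hδpos.le]
    have hintnorm : IntegrableOn (fun x => ‖g x‖) (Set.Ioc 0 δ) := by
      have := (intervalIntegrable_iff.1 hintδ)
      rw [Set.uIoc_of_le hδpos.le] at this
      exact this.norm
    have hbint : IntegrableOn (fun x : ℝ => ε' * (x * Real.exp (-(c * R * x))))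
        (Set.Ioc 0 δ) :=
      ((hIoi.mono_set Set.Ioc_subset_Ioi_self).const_mul ε')
    calc ‖∫ x in Set.Ioc (0:ℝ) δ, g x‖ ≤ ∫ x in Set.Ioc (0:ℝ) δ, ‖g x‖ :=
          norm_integral_le_integral_norm _
      _ ≤ ∫ x in Set.Ioc (0:ℝ) δ, ε' * (x * Real.exp (-(c * R * x))) := by
          refine setIntegral_mono_on hintnorm hbint measurableSet_Ioc fun x hx => ?_
          rw [hnorm x]
          rw [← mul_assoc]
          exact mul_le_mul_of_nonneg_right (hQsmall x hx) (Real.exp_pos _).le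
      _ ≤ ∫ x in Set.Ioi (0:ℝ), ε' * (x * Real.exp (-(c * R * x))) := by
          refine setIntegral_mono_set (hIoi.const_mul ε') ?_
            (ae_of_all _ Set.Ioc_subset_Ioi_self)
          refine (ae_restrict_iff' measurableSet_Ioi).2 (ae_of_all _ fun x hx => ?_)
          have : (0:ℝ) < x := hx
          positivity
      _ = ε' * (1 / (c * R)) ^ 2 := by
          rw [integral_const_mul, hval]
  -- second piece
  have h2 : ‖∫ x in δ..1, g x‖ ≤ M * Real.exp (-(c * R * δ)) := by
    have hb : ∀ x ∈ Set.uIoc δ 1, ‖g x‖ ≤ M * Real.exp (-(c * R * δ)) := by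
      intro x hx
      rw [Set.uIoc_of_le hδ1] at hx
      rw [hnorm x]
      have h1' : ‖Q x‖ ≤ M := hM x ⟨(hδpos.trans hx.1).le, hx.2⟩
      have h2' : Real.exp (-(c * R * x)) ≤ Real.exp (-(c * R * δ)) := by
        rw [Real.exp_le_exp]
        have : c * R * δ ≤ c * R * x := mul_le_mul_of_nonneg_left hx.1.le hcR.le
        linarith
      exact mul_le_mul h1' h2' (Real.exp_pos _).le hMnn
    have := intervalIntegral.norm_integral_le_of_norm_le_const hb
    have habs : |(1:ℝ) - δ| ≤ 1 := by
      rw [abs_of_nonneg (by linarith)]; linarith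
    calc ‖∫ x in δ..1, g x‖ ≤ M * Real.exp (-(c * R * δ)) * |1 - δ| := this
      _ ≤ M * Real.exp (-(c * R * δ)) * 1 :=
          mul_le_mul_of_nonneg_left habs (by positivity)
      _ = M * Real.exp (-(c * R * δ)) := mul_one _
  -- combine
  have hsplit : (∫ x in (0:ℝ)..1, g x) = (∫ x in (0:ℝ)..δ, g x) + ∫ x in δ..1, g x :=
    (intervalIntegral.integral_add_adjacent_intervals hintδ hintδ1).symm
  have hnormR : ‖((R:ℂ)) ^ 2‖ = R ^ 2 := by
    rw [norm_pow, Complex.norm_real, Real.norm_eq_abs, abs_of_pos hR0]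
  calc ‖(R:ℂ) ^ 2 * ∫ x in (0:ℝ)..1, g x‖
      = R ^ 2 * ‖∫ x in (0:ℝ)..1, g x‖ := by rw [norm_mul, hnormR]
    _ ≤ R ^ 2 * (ε' * (1 / (c * R)) ^ 2 + M * Real.exp (-(c * R * δ))) := by
        apply mul_le_mul_of_nonneg_left _ (by positivity)
        rw [hsplit]
        exact (norm_add_le _ _).trans (add_le_add h1 h2)
    _ = ε / 4 + M * (R ^ 2 * Real.exp (-(c * δ) * R)) := by
        rw [hε'def]
        have : -(c * R * δ) = -(c * δ) * R := by ring
        rw [this]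
        field_simp
    _ < ε := by linarith
end

section
/- Let Ψ : [0, 1] → ℂ be continuously differentiable with Re Ψ(x) ≤ -c·x for some c > 0 and all x ∈ [0, 1], and suppose |Ψ'(x)| ≤ K. Let Q : [0, 1] → ℂ be of bounded variation with Q(0) = 0 and Q(x)/x → 0 as x → 0⁺. Then R² ∫₀^1 Ψ'(x) Q(x) e^{RΨ(x)} dx → 0 as R → ∞. -/
open Filter MeasureTheory

private lemma integral_x_exp_le (a : ℝ) (ha : 0 < a) :
    ∫ x in (0:ℝ)..1, x * Real.exp (-a * x) ≤ 1 / a ^ 2 := by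
  have key : ∀ x ∈ Set.uIcc (0:ℝ) 1,
      HasDerivAt (fun y => -((y / a + 1 / a ^ 2) * Real.exp (-a * y)))
        (x * Real.exp (-a * x)) x := by
    intro x _
    have h1 : HasDerivAt (fun y : ℝ => -a * y) (-a) x := by
      simpa using (hasDerivAt_id x).const_mul (-a)
    have h2 : HasDerivAt (fun y : ℝ => Real.exp (-a * y))
        (Real.exp (-a * x) * (-a)) x := h1.exp
    have h3 : HasDerivAt (fun y : ℝ => y / a + 1 / a ^ 2) (1 / a) x :=
      ((hasDerivAt_id x).div_const a).add_const (1 / a ^ 2)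
    have : HasDerivAt (fun y => -((y / a + 1 / a ^ 2) * Real.exp (-a * y))) _ x :=
      (h3.mul h2).neg
    convert this using 1
    field_simp [ha.ne']
    ring
  have hint : IntervalIntegrable (fun x => x * Real.exp (-a * x)) volume 0 1 := by
    apply Continuous.intervalIntegrable
    continuity
  rw [intervalIntegral.integral_eq_sub_of_hasDerivAt key hint]
  have h4 : 0 ≤ (1 / a + 1 / a ^ 2) * Real.exp (-a) := by positivity
  have h5 : Real.exp (-a * 0) = 1 := by norm_num
  rw [h5]
  simp only [zero_div, zero_add, mul_one]
  linarith

set_option maxHeartbeats 1000000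

/-- One-dimensional core of Lemma 3.2: for `Ψ` continuously differentiable on `[0,1]`
with `Re Ψ(x) ≤ -c x` and `|Ψ'| ≤ K`, and `Q` of bounded variation with `Q(0) = 0`
and `Q(x)/x → 0` as `x → 0⁺`, one has `R² ∫₀¹ Ψ'(x) Q(x) e^{RΨ(x)} dx → 0`. -/
theorem laplace_bv_decay (Ψ Ψ' : ℝ → ℂ) (c K : ℝ) (hc : 0 < c)
    (hderiv : ∀ x ∈ Set.Icc (0 : ℝ) 1, HasDerivAt Ψ (Ψ' x) x)
    (hcont : ContinuousOn Ψ' (Set.Icc 0 1))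
    (hre : ∀ x ∈ Set.Icc (0 : ℝ) 1, (Ψ x).re ≤ -c * x)
    (hK : ∀ x ∈ Set.Icc (0 : ℝ) 1, ‖Ψ' x‖ ≤ K)
    (Q : ℝ → ℂ) (hQBV : BoundedVariationOn Q (Set.Icc 0 1)) (hQ0 : Q 0 = 0)
    (hQderiv : Tendsto (fun x : ℝ => Q x / (x : ℂ)) (nhdsWithin 0 (Set.Ioi 0))
      (nhds 0)) :
    Tendsto (fun R : ℝ =>
        (R : ℂ) ^ 2 * ∫ x in (0 : ℝ)..1, Ψ' x * Q x * Complex.exp (R * Ψ x))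
      atTop (nhds 0) := by
  -- global bound for Q
  set M : ℝ := (eVariationOn Q (Set.Icc 0 1)).toReal with hM
  have hK0 : 0 ≤ K := le_trans (norm_nonneg _) (hK 0 ⟨le_refl _, zero_le_one⟩)
  have hM0 : 0 ≤ M := ENNReal.toReal_nonneg
  have hQM : ∀ x ∈ Set.Icc (0:ℝ) 1, ‖Q x‖ ≤ M := by
    intro x hx
    have h1 : edist (Q x) (Q 0) ≤ eVariationOn Q (Set.Icc 0 1) :=
      eVariationOn.edist_le Q hx ⟨le_refl _, zero_le_one⟩
    have h2 := ENNReal.toReal_mono hQBV h1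
    rwa [hQ0, edist_zero_right, ← ofReal_norm,
      ENNReal.toReal_ofReal (norm_nonneg _)] at h2
  rw [NormedAddCommGroup.tendsto_nhds_zero]
  intro ε hε
  -- choose ε' and δ
  set ε' : ℝ := ε * c ^ 2 / (4 * (K + 1)) with hε'
  have hε'0 : 0 < ε' := by positivity
  obtain ⟨δ₀, hδ₀, hδQ⟩ := (Metric.tendsto_nhdsWithin_nhds.mp hQderiv) ε' hε'0
  set δ : ℝ := min (δ₀ / 2) 1 with hδdef
  have hδ0 : 0 < δ := lt_min (by linarith) one_pos
  have hδ1 : δ ≤ 1 := min_le_right _ _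
  have hQsmall : ∀ x : ℝ, 0 < x → x ≤ δ → ‖Q x‖ ≤ ε' * x := by
    intro x hx hxδ
    have hxδ₀ : dist x 0 < δ₀ := by
      rw [Real.dist_eq, sub_zero, abs_of_pos hx]
      have : δ ≤ δ₀ / 2 := min_le_left _ _
      linarith
    have := hδQ hx hxδ₀
    rw [dist_zero_right] at this
    have hx0 : (x:ℂ) ≠ 0 := by exact_mod_cast hx.ne'
    have hdiv : ‖Q x / (x:ℂ)‖ = ‖Q x‖ / x := by
      rw [norm_div, Complex.norm_real, Real.norm_of_nonneg hx.le]
    rw [hdiv, div_lt_iff₀ hx] at this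
    linarith [this]
  -- the tail tends to 0
  have htail : Tendsto (fun R : ℝ => K * M * (R ^ 2 * Real.exp (-(c * δ) * R)))
      atTop (nhds 0) := by
    have hb : (0:ℝ) < c * δ := by positivity
    have h1 : Tendsto (fun R : ℝ => (c * δ * R) ^ 2 * Real.exp (-(c * δ * R)))
        atTop (nhds 0) :=
      (Real.tendsto_pow_mul_exp_neg_atTop_nhds_zero 2).comp
        (tendsto_id.const_mul_atTop hb)
    have h2 : Tendsto (fun R : ℝ =>
        (K * M / (c * δ) ^ 2) * ((c * δ * R) ^ 2 * Real.exp (-(c * δ * R))))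
        atTop (nhds 0) := by
      simpa using h1.const_mul (K * M / (c * δ) ^ 2)
    refine h2.congr (fun R => ?_)
    have : -(c * δ * R) = -(c * δ) * R := by ring
    rw [this]
    field_simp
  have hev : ∀ᶠ R : ℝ in atTop,
      K * M * (R ^ 2 * Real.exp (-(c * δ) * R)) < ε / 2 := by
    have := htail.eventually (eventually_lt_nhds (show (0:ℝ) < ε / 2 by linarith))
    simpa using this
  filter_upwards [hev, eventually_ge_atTop (1:ℝ)] with R hRtail hR1
  have hR0 : 0 < R := lt_of_lt_of_le one_pos hR1
  set a : ℝ := c * R with ha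
  have ha0 : 0 < a := by positivity
  -- the bounding function
  set B : ℝ → ℝ := fun x => K * ε' * (x * Real.exp (-a * x)) +
      Set.indicator (Set.Ici δ) (fun y => K * M * Real.exp (-a * y)) x with hB
  have hBint1 : IntegrableOn (fun x => K * ε' * (x * Real.exp (-a * x)))
      (Set.Ioc (0:ℝ) 1) volume := by
    apply Continuous.integrableOn_Ioc
    exact (continuous_const.mul (continuous_id.mul
      (Real.continuous_exp.comp (continuous_const.mul continuous_id))))
  have hBint2 : IntegrableOn
      (Set.indicator (Set.Ici δ) (fun y => K * M * Real.exp (-a * y)))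
      (Set.Ioc (0:ℝ) 1) volume := by
    apply Integrable.indicator _ measurableSet_Ici
    apply Continuous.integrableOn_Ioc
    exact continuous_const.mul (Real.continuous_exp.comp (continuous_const.mul continuous_id))
  have hBint : IntegrableOn B (Set.Ioc (0:ℝ) 1) volume := hBint1.add hBint2
  -- pointwise bound
  have hbound : ∀ x ∈ Set.Ioc (0:ℝ) 1,
      ‖Ψ' x * Q x * Complex.exp (R * Ψ x)‖ ≤ B x := by
    intro x hx
    have hxI : x ∈ Set.Icc (0:ℝ) 1 := ⟨hx.1.le, hx.2⟩
    have hnorm : ‖Ψ' x * Q x * Complex.exp (R * Ψ x)‖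
        = ‖Ψ' x‖ * ‖Q x‖ * Real.exp (((R:ℂ) * Ψ x).re) := by
      rw [norm_mul, norm_mul, Complex.norm_exp]
    have hre' : ((R:ℂ) * Ψ x).re ≤ -a * x := by
      have : ((R:ℂ) * Ψ x).re = R * (Ψ x).re := by
        simp [Complex.mul_re]
      rw [this, ha]
      have := hre x hxI
      nlinarith [hre x hxI]
    have hexp : Real.exp (((R:ℂ) * Ψ x).re) ≤ Real.exp (-a * x) :=
      Real.exp_le_exp.mpr hre'
    have hQb : ‖Q x‖ ≤ ε' * x + Set.indicator (Set.Ici δ) (fun _ => M) x := by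
      by_cases hxδ : x ∈ Set.Ici δ
      · rw [Set.indicator_of_mem hxδ]
        have := hQM x hxI
        nlinarith [hε'0.le, hx.1]
      · rw [Set.indicator_of_notMem hxδ, add_zero]
        exact hQsmall x hx.1 (le_of_not_ge (fun h => hxδ h))
    rw [hnorm]
    have h1 : ‖Ψ' x‖ * ‖Q x‖ * Real.exp (((R:ℂ) * Ψ x).re)
        ≤ K * (ε' * x + Set.indicator (Set.Ici δ) (fun _ => M) x) * Real.exp (-a * x) := by
      have hΨK := hK x hxI
      have hind : (0:ℝ) ≤ Set.indicator (Set.Ici δ) (fun _ => M) x :=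
        Set.indicator_nonneg (fun _ _ => hM0) x
      have hQ0' : (0:ℝ) ≤ ‖Q x‖ := norm_nonneg _
      have hind2 : (0:ℝ) ≤ K * (ε' * x + Set.indicator (Set.Ici δ) (fun _ => M) x) :=
        mul_nonneg hK0 (add_nonneg (mul_nonneg hε'0.le hx.1.le) hind)
      exact mul_le_mul (mul_le_mul hΨK hQb hQ0' hK0) hexp (Real.exp_nonneg _) hind2
    refine le_trans h1 ?_
    simp only [hB]
    by_cases hxδ : x ∈ Set.Ici δ
    · rw [Set.indicator_of_mem hxδ, Set.indicator_of_mem hxδ]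
      ring_nf
      exact le_refl _
    · rw [Set.indicator_of_notMem hxδ, Set.indicator_of_notMem hxδ]
      ring_nf
      exact le_refl _
  -- bound the integral
  have hIoc : (∫ x in (0:ℝ)..1, Ψ' x * Q x * Complex.exp (R * Ψ x))
      = ∫ x in Set.Ioc (0:ℝ) 1, Ψ' x * Q x * Complex.exp (R * Ψ x) := by
    rw [intervalIntegral.integral_of_le zero_le_one]
  have hnormle : ‖∫ x in Set.Ioc (0:ℝ) 1, Ψ' x * Q x * Complex.exp (R * Ψ x)‖
      ≤ ∫ x in Set.Ioc (0:ℝ) 1, B x := by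
    apply norm_integral_le_of_norm_le hBint
    filter_upwards [self_mem_ae_restrict measurableSet_Ioc] with x hx
    exact hbound x hx
  -- compute the bound on ∫ B
  have hI1 : (∫ x in Set.Ioc (0:ℝ) 1, K * ε' * (x * Real.exp (-a * x)))
      ≤ K * ε' / a ^ 2 := by
    rw [integral_const_mul]
    have h1 : (∫ x in Set.Ioc (0:ℝ) 1, x * Real.exp (-a * x))
        = ∫ x in (0:ℝ)..1, x * Real.exp (-a * x) := by
      rw [intervalIntegral.integral_of_le zero_le_one]
    rw [h1]
    have h2 := integral_x_exp_le a ha0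
    calc K * ε' * ∫ x in (0:ℝ)..1, x * Real.exp (-a * x)
        ≤ K * ε' * (1 / a ^ 2) := by
          apply mul_le_mul_of_nonneg_left h2 (by positivity)
      _ = K * ε' / a ^ 2 := by ring
  have hI2 : (∫ x in Set.Ioc (0:ℝ) 1,
      Set.indicator (Set.Ici δ) (fun y => K * M * Real.exp (-a * y)) x)
      ≤ K * M * Real.exp (-a * δ) := by
    rw [integral_indicator measurableSet_Ici]
    have h3 : ‖∫ x in Set.Ici δ, (fun y => K * M * Real.exp (-a * y)) x
        ∂(volume.restrict (Set.Ioc (0:ℝ) 1))‖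
        ≤ K * M * Real.exp (-a * δ) * ((volume.restrict (Set.Ioc (0:ℝ) 1)) (Set.Ici δ)).toReal := by
      apply norm_setIntegral_le_of_norm_le_const
      · rw [Measure.restrict_apply' measurableSet_Ioc]
        exact lt_of_le_of_lt (measure_mono Set.inter_subset_right) measure_Ioc_lt_top
      · intro x hx
        rw [Real.norm_of_nonneg (by positivity)]
        have : Real.exp (-a * x) ≤ Real.exp (-a * δ) :=
          Real.exp_le_exp.mpr (by nlinarith [Set.mem_Ici.mp hx, ha0])
        exact mul_le_mul_of_nonneg_left this (by positivity : (0:ℝ) ≤ K * M)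
    have hvol : ((volume.restrict (Set.Ioc (0:ℝ) 1)) (Set.Ici δ)).toReal ≤ 1 := by
      rw [Measure.restrict_apply' measurableSet_Ioc]
      have : volume (Set.Ici δ ∩ Set.Ioc (0:ℝ) 1) ≤ volume (Set.Ioc (0:ℝ) 1) :=
        measure_mono Set.inter_subset_right
      have h4 : volume (Set.Ioc (0:ℝ) 1) = 1 := by simp
      calc (volume (Set.Ici δ ∩ Set.Ioc (0:ℝ) 1)).toReal
          ≤ (volume (Set.Ioc (0:ℝ) 1)).toReal := by
            apply ENNReal.toReal_mono (by simp [h4]) this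
        _ = 1 := by simp [h4]
    calc (∫ x in Set.Ici δ, K * M * Real.exp (-a * x)
          ∂(volume.restrict (Set.Ioc (0:ℝ) 1)))
        ≤ ‖∫ x in Set.Ici δ, K * M * Real.exp (-a * x)
          ∂(volume.restrict (Set.Ioc (0:ℝ) 1))‖ := le_abs_self _
      _ ≤ K * M * Real.exp (-a * δ) *
          ((volume.restrict (Set.Ioc (0:ℝ) 1)) (Set.Ici δ)).toReal := h3
      _ ≤ K * M * Real.exp (-a * δ) * 1 := by
          apply mul_le_mul_of_nonneg_left hvol (by positivity)
      _ = K * M * Real.exp (-a * δ) := mul_one _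
  have hIB : (∫ x in Set.Ioc (0:ℝ) 1, B x)
      ≤ K * ε' / a ^ 2 + K * M * Real.exp (-a * δ) := by
    simp only [hB]
    rw [integral_add hBint1 hBint2]
    exact add_le_add hI1 hI2
  -- assemble
  have hfinal : ‖(R : ℂ) ^ 2 * ∫ x in (0:ℝ)..1, Ψ' x * Q x * Complex.exp (R * Ψ x)‖
      = R ^ 2 * ‖∫ x in Set.Ioc (0:ℝ) 1, Ψ' x * Q x * Complex.exp (R * Ψ x)‖ := by
    rw [hIoc, norm_mul]
    congr 1
    rw [norm_pow, Complex.norm_real, Real.norm_of_nonneg hR0.le]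
  rw [hfinal]
  have h5 : R ^ 2 * ‖∫ x in Set.Ioc (0:ℝ) 1, Ψ' x * Q x * Complex.exp (R * Ψ x)‖
      ≤ R ^ 2 * (K * ε' / a ^ 2 + K * M * Real.exp (-a * δ)) := by
    apply mul_le_mul_of_nonneg_left (le_trans hnormle hIB) (by positivity)
  have h6 : R ^ 2 * (K * ε' / a ^ 2 + K * M * Real.exp (-a * δ))
      = K * ε' / c ^ 2 + K * M * (R ^ 2 * Real.exp (-(c * δ) * R)) := by
    rw [ha]
    have : -(c * R) * δ = -(c * δ) * R := by ring
    rw [this]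
    field_simp
  have h7 : K * ε' / c ^ 2 < ε / 2 := by
    rw [hε']
    have hK1 : (0:ℝ) < K + 1 := by linarith
    have heq : K * (ε * c ^ 2 / (4 * (K + 1))) / c ^ 2 = K * ε / (4 * (K + 1)) := by
      field_simp
    rw [heq, div_lt_iff₀ (by positivity : (0:ℝ) < 4 * (K + 1))]
    nlinarith [mul_nonneg hK0 hε.le, hε]
  calc R ^ 2 * ‖∫ x in Set.Ioc (0:ℝ) 1, Ψ' x * Q x * Complex.exp (R * Ψ x)‖
      ≤ K * ε' / c ^ 2 + K * M * (R ^ 2 * Real.exp (-(c * δ) * R)) := by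
        rw [← h6]; exact h5
    _ < ε / 2 + ε / 2 := add_lt_add h7 hRtail
    _ = ε := by ring
end
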